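/- (Exact-arithmetic convergence of the Newton iteration for the matrix sign function.) Let A be an n×n complex matrix with A = V D V⁻¹, where V is invertible and D is diagonal with every diagonal entry having nonzero real part and lying in C^±_α for some α ∈ (0,1). Let S = V·sgn(D)·V⁻¹, where sgn(D) is the diagonal matrix whose i-th entry is +1 if Re(D_ii) > 0 and −1 if Re(D_ii) < 0. Define the Newton iterates A_0 = A, A_{k+1} = (A_k + A_k⁻¹)/2. Then every iterate A_k is invertible, and for every N ≥ 0: ‖A_N − S‖ ≤ (4·α^{2^N}/(1 − α^{2^N}))·‖V‖·‖V⁻¹‖. -/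

import Mathlib

/-- The Euclidean norm of a vector in `ℂⁿ`. -/
noncomputable def euclidEnorm {n : ℕ} (v : Fin n → ℂ) : ℝ :=
  Real.sqrt (∑ i, ‖v i‖ ^ 2)

/-- The spectral norm (`ℓ² → ℓ²` operator norm) of a complex matrix:
the supremum of `‖Av‖` over Euclidean-unit vectors `v`. -/
noncomputable def specNorm {m n : ℕ} (A : Matrix (Fin m) (Fin n) ℂ) : ℝ :=
  sSup {s | ∃ v : Fin n → ℂ, euclidEnorm v = 1 ∧ s = euclidEnorm (A.mulVec v)}

/-- The `ε`-pseudospectrum of a square complex matrix `M`: the set of `z ∈ ℂ` such that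
`z·I − M` is not invertible or `‖(z·I − M)⁻¹‖ > 1/ε`. -/
noncomputable def pseudospectrum {m : ℕ} (ε : ℝ) (M : Matrix (Fin m) (Fin m) ℂ) : Set ℂ :=
  {z | ¬ IsUnit (z • (1 : Matrix (Fin m) (Fin m) ℂ) - M) ∨
    1 / ε < specNorm (z • (1 : Matrix (Fin m) (Fin m) ℂ) - M)⁻¹}

/-- The Apollonian region `C⁺_α = { z : |1 - z| ≤ α |1 + z| }`. -/
def Cplus (α : ℝ) : Set ℂ := {z | ‖1 - z‖ ≤ α * ‖1 + z‖}

/-- The Apollonian region `C⁻_α = { z : |1 + z| ≤ α |1 - z| }`. -/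
def Cminus (α : ℝ) : Set ℂ := {z | ‖1 + z‖ ≤ α * ‖1 - z‖}

/-- `C^±_α = C⁺_α ∪ C⁻_α`. -/
def Cpm (α : ℝ) : Set ℂ := Cplus α ∪ Cminus α

/-- One step of the Newton iteration for the matrix sign function: `M ↦ (M + M⁻¹)/2`. -/
noncomputable def newtonStep {n : ℕ} (M : Matrix (Fin n) (Fin n) ℂ) :
    Matrix (Fin n) (Fin n) ℂ :=
  (2 : ℂ)⁻¹ • (M + M⁻¹)

/-!
The scalar Newton map `g z = (z + z⁻¹)/2` satisfies `1 - g z = -(1 - z)²/(2z)` and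
`1 + g z = (1 + z)²/(2z)`, so it maps `C⁺_β` into `C⁺_{β²}`; being odd, it maps `C⁻_β` into
`C⁻_{β²}`. Hence `g^N z ∈ C^±_{α^{2^N}}`, and a point of `C⁺_β` lies within `2β/(1 - β)` of `1`.
The matrix iteration commutes with similarities and acts entrywise on invertible diagonal matrices,
so `A_N - S = V (g^N(D) - sgn D) V⁻¹`, which submultiplicativity of the spectral norm bounds.
-/

open Matrix
open scoped Matrix.Norms.L2Operator

noncomputable def newtonScalar (z : ℂ) : ℂ := (2 : ℂ)⁻¹ * (z + z⁻¹)

section Apollonian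

variable {β : ℝ} {z : ℂ}

lemma ne_zero_of_mem_Cplus (hβ : β < 1) (hz : z ∈ Cplus β) : z ≠ 0 := by
  rintro rfl
  simp only [Cplus, Set.mem_ofPred_eq, sub_zero, add_zero, norm_one, mul_one] at hz
  linarith

lemma re_pos_of_mem_Cplus (hβ : β < 1) (hz : z ∈ Cplus β) : 0 < z.re := by
  have hpos : 0 < ‖1 + z‖ := norm_pos_iff.mpr fun h => by
    rw [show z = -1 by linear_combination h] at hz
    norm_num [Cplus] at hz
  have hlt : Complex.normSq (1 - z) < Complex.normSq (1 + z) := by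
    rw [← Complex.sq_norm, ← Complex.sq_norm]
    have : ‖1 - z‖ < ‖1 + z‖ := hz.trans_lt (by nlinarith)
    exact pow_lt_pow_left₀ this (norm_nonneg _) two_ne_zero
  simp only [Complex.normSq_apply, Complex.sub_re, Complex.sub_im, Complex.add_re,
    Complex.add_im, Complex.one_re, Complex.one_im] at hlt
  nlinarith

lemma neg_mem_Cplus_iff : -z ∈ Cplus β ↔ z ∈ Cminus β := by
  simp [Cplus, Cminus, sub_neg_eq_add, ← sub_eq_add_neg]

lemma norm_sub_one_le_of_mem_Cplus (hβ₀ : 0 ≤ β) (hβ : β < 1) (hz : z ∈ Cplus β) :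
    ‖z - 1‖ ≤ 2 * β / (1 - β) := by
  have hz' : ‖1 - z‖ ≤ β * ‖1 + z‖ := hz
  have htri : ‖1 + z‖ ≤ 2 + ‖1 - z‖ :=
    calc ‖1 + z‖ = ‖(2 : ℂ) - (1 - z)‖ := by ring_nf
      _ ≤ ‖(2 : ℂ)‖ + ‖1 - z‖ := norm_sub_le _ _
      _ = 2 + ‖1 - z‖ := by rw [Complex.norm_two]
  rw [norm_sub_rev, le_div_iff₀ (by linarith)]
  nlinarith [norm_nonneg (1 - z)]

end Apollonian

section NewtonScalar

lemma newtonScalar_neg (z : ℂ) : newtonScalar (-z) = -newtonScalar z := by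
  simp only [newtonScalar, inv_neg]
  ring

lemma newtonScalar_iterate_neg (N : ℕ) (z : ℂ) :
    newtonScalar^[N] (-z) = -newtonScalar^[N] z :=
  (Function.Semiconj.iterate_right (f := Neg.neg) (fun z => (newtonScalar_neg z).symm) N z).symm

lemma newtonScalar_mem_Cplus_sq {β : ℝ} {z : ℂ} (hz₀ : z ≠ 0) (hz : z ∈ Cplus β) :
    newtonScalar z ∈ Cplus (β ^ 2) := by
  have hminus : 1 - newtonScalar z = -((1 - z) ^ 2 / (2 * z)) := by
    simp only [newtonScalar]; field_simp; ring
  have hplus : 1 + newtonScalar z = (1 + z) ^ 2 / (2 * z) := by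
    simp only [newtonScalar]; field_simp; ring
  have hsq : ‖1 - z‖ ^ 2 ≤ β ^ 2 * ‖1 + z‖ ^ 2 := by
    rw [← mul_pow]; exact pow_le_pow_left₀ (norm_nonneg _) hz 2
  change ‖1 - newtonScalar z‖ ≤ β ^ 2 * ‖1 + newtonScalar z‖
  rw [hminus, hplus, norm_neg, norm_div, norm_div, norm_pow, norm_pow, ← mul_div_assoc]
  gcongr

lemma newtonScalar_iterate_mem_Cplus {α : ℝ} (hα₀ : 0 ≤ α) (hα : α < 1) {z : ℂ}
    (hz : z ∈ Cplus α) (N : ℕ) : newtonScalar^[N] z ∈ Cplus (α ^ 2 ^ N) := by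
  induction N with
  | zero => simpa using hz
  | succ N ih =>
    rw [Function.iterate_succ_apply', pow_succ, pow_mul]
    exact newtonScalar_mem_Cplus_sq
      (ne_zero_of_mem_Cplus (pow_lt_one₀ hα₀ hα (by positivity)) ih) ih

lemma newtonScalar_iterate_near_sign {α : ℝ} (hα₀ : 0 ≤ α) (hα : α < 1) {z : ℂ}
    (hz : z ∈ Cpm α) (N : ℕ) :
    newtonScalar^[N] z ≠ 0 ∧
      ‖newtonScalar^[N] z - (if 0 < z.re then 1 else -1)‖ ≤ 2 * α ^ 2 ^ N / (1 - α ^ 2 ^ N) := by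
  have hβ₀ : 0 ≤ α ^ 2 ^ N := pow_nonneg hα₀ _
  have hβ : α ^ 2 ^ N < 1 := pow_lt_one₀ hα₀ hα (by positivity)
  rcases hz with hplus | hminus
  · have hN := newtonScalar_iterate_mem_Cplus hα₀ hα hplus N
    rw [if_pos (re_pos_of_mem_Cplus hα hplus)]
    exact ⟨ne_zero_of_mem_Cplus hβ hN, norm_sub_one_le_of_mem_Cplus hβ₀ hβ hN⟩
  · have hneg := neg_mem_Cplus_iff.mpr hminus
    have hN := newtonScalar_iterate_mem_Cplus hα₀ hα hneg N
    rw [newtonScalar_iterate_neg] at hN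
    have hre : ¬ 0 < z.re := by
      have := re_pos_of_mem_Cplus hα hneg
      rw [Complex.neg_re] at this
      linarith
    rw [if_neg hre, show newtonScalar^[N] z - -1 = -(-newtonScalar^[N] z - 1) by ring, norm_neg]
    exact ⟨neg_ne_zero.mp (ne_zero_of_mem_Cplus hβ hN), norm_sub_one_le_of_mem_Cplus hβ₀ hβ hN⟩

end NewtonScalar

section NewtonMatrix

variable {n : ℕ}

lemma inv_conj {V : Matrix (Fin n) (Fin n) ℂ} (hV : IsUnit V) (M : Matrix (Fin n) (Fin n) ℂ) :
    (V * M * V⁻¹)⁻¹ = V * M⁻¹ * V⁻¹ := by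
  rw [Matrix.mul_inv_rev, Matrix.mul_inv_rev,
    nonsing_inv_nonsing_inv _ ((isUnit_iff_isUnit_det V).mp hV), Matrix.mul_assoc]

lemma isUnit_conj_iff {V : Matrix (Fin n) (Fin n) ℂ} (hV : IsUnit V)
    (M : Matrix (Fin n) (Fin n) ℂ) : IsUnit (V * M * V⁻¹) ↔ IsUnit M := by
  simp [IsUnit.mul_iff, hV, isUnit_nonsing_inv_iff]

lemma newtonStep_conj {V : Matrix (Fin n) (Fin n) ℂ} (hV : IsUnit V)
    (M : Matrix (Fin n) (Fin n) ℂ) : newtonStep (V * M * V⁻¹) = V * newtonStep M * V⁻¹ := by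
  rw [newtonStep, newtonStep, inv_conj hV, Matrix.mul_smul, Matrix.smul_mul, Matrix.mul_add,
    Matrix.add_mul]

lemma newtonStep_iterate_conj {V : Matrix (Fin n) (Fin n) ℂ} (hV : IsUnit V)
    (M : Matrix (Fin n) (Fin n) ℂ) (k : ℕ) :
    newtonStep^[k] (V * M * V⁻¹) = V * newtonStep^[k] M * V⁻¹ :=
  (Function.Semiconj.iterate_right (f := fun M => V * M * V⁻¹)
    (fun M => (newtonStep_conj hV M).symm) k M).symm

lemma inv_diagonal_of_ne_zero {e : Fin n → ℂ} (he : ∀ i, e i ≠ 0) :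
    (diagonal e)⁻¹ = diagonal fun i => (e i)⁻¹ :=
  inv_eq_left_inv (by simp [diagonal_mul_diagonal, he])

lemma newtonStep_diagonal {e : Fin n → ℂ} (he : ∀ i, e i ≠ 0) :
    newtonStep (diagonal e) = diagonal fun i => newtonScalar (e i) := by
  rw [newtonStep, inv_diagonal_of_ne_zero he, diagonal_add, ← diagonal_smul]
  rfl

lemma newtonStep_iterate_diagonal {e : Fin n → ℂ}
    (he : ∀ k i, newtonScalar^[k] (e i) ≠ 0) (k : ℕ) :
    newtonStep^[k] (diagonal e) = diagonal fun i => newtonScalar^[k] (e i) := by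
  induction k with
  | zero => rfl
  | succ k ih =>
    simp only [Function.iterate_succ_apply', ih, newtonStep_diagonal (he k)]

end NewtonMatrix

section SpectralNorm

variable {m n : ℕ}

lemma euclidEnorm_eq_norm_toLp (v : Fin n → ℂ) : euclidEnorm v = ‖WithLp.toLp 2 v‖ := by
  simp [euclidEnorm, EuclideanSpace.norm_eq]

lemma specNorm_eq_l2_opNorm (A : Matrix (Fin m) (Fin n) ℂ) : specNorm A = ‖A‖ := by
  rw [l2_opNorm_def, ← ContinuousLinearMap.sSup_sphere_eq_norm, specNorm]
  congr 1
  ext s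
  simp only [euclidEnorm_eq_norm_toLp, Set.mem_ofPred_eq, Set.mem_image, mem_sphere_iff_norm,
    sub_zero]
  constructor
  · rintro ⟨v, hv, rfl⟩
    exact ⟨WithLp.toLp 2 v, hv, rfl⟩
  · rintro ⟨x, hx, rfl⟩
    exact ⟨x.ofLp, hx, rfl⟩

lemma specNorm_nonneg (A : Matrix (Fin m) (Fin n) ℂ) : 0 ≤ specNorm A :=
  specNorm_eq_l2_opNorm A ▸ norm_nonneg A

lemma specNorm_mul_diagonal_mul_le (V W : Matrix (Fin n) (Fin n) ℂ) (c : Fin n → ℂ) {b : ℝ}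
    (hb : 0 ≤ b) (hc : ∀ i, ‖c i‖ ≤ b) :
    specNorm (V * diagonal c * W) ≤ b * (specNorm V * specNorm W) := by
  simp only [specNorm_eq_l2_opNorm]
  calc ‖V * diagonal c * W‖ ≤ ‖V‖ * ‖diagonal c‖ * ‖W‖ := norm_mul₃_le
    _ ≤ ‖V‖ * b * ‖W‖ := by
        gcongr
        rw [l2_opNorm_diagonal]
        exact (pi_norm_le_iff_of_nonneg hb).mpr hc
    _ = b * (‖V‖ * ‖W‖) := by ring

end SpectralNorm

/-- (Exact-arithmetic convergence of the Newton iteration for the matrix sign function.)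
Let `A = V D V⁻¹` with `V` invertible and `D = diagonal d`, with every `d i` having nonzero real
part and lying in `C^±_α` for some `α ∈ (0,1)`.  Let `S = V·sgn(D)·V⁻¹`.  Then every Newton
iterate `A_k` is invertible, and for every `N`,
`‖A_N − S‖ ≤ (4 α^{2^N}/(1 − α^{2^N}))·‖V‖·‖V⁻¹‖`. -/
theorem newton_exact_convergence {n : ℕ} (A V : Matrix (Fin n) (Fin n) ℂ)
    (d : Fin n → ℂ) (α : ℝ) (hα : α ∈ Set.Ioo (0 : ℝ) 1)
    (hV : IsUnit V) (hA : A = V * Matrix.diagonal d * V⁻¹)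
    (hd : ∀ i, (d i).re ≠ 0 ∧ d i ∈ Cpm α) :
    (∀ k : ℕ, IsUnit (newtonStep^[k] A)) ∧
    ∀ N : ℕ,
      specNorm (newtonStep^[N] A -
          V * Matrix.diagonal (fun i => if 0 < (d i).re then 1 else -1) * V⁻¹)
        ≤ 4 * α ^ (2 ^ N) / (1 - α ^ (2 ^ N)) * (specNorm V * specNorm V⁻¹) := by
  have hscalar := fun i => newtonScalar_iterate_near_sign hα.1.le hα.2 (hd i).2
  have hiter (k : ℕ) :
      newtonStep^[k] A = V * diagonal (fun i => newtonScalar^[k] (d i)) * V⁻¹ := by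
    rw [hA, newtonStep_iterate_conj hV,
      newtonStep_iterate_diagonal (fun k i => (hscalar i k).1)]
  refine ⟨fun k => ?_, fun N => ?_⟩
  · rw [hiter, isUnit_conj_iff hV, isUnit_diagonal, Pi.isUnit_iff]
    exact fun i => (hscalar i k).1.isUnit
  · have hβ₀ : 0 ≤ α ^ 2 ^ N := pow_nonneg hα.1.le _
    have hβ : α ^ 2 ^ N < 1 := pow_lt_one₀ hα.1.le hα.2 (by positivity)
    rw [hiter, ← Matrix.sub_mul, ← Matrix.mul_sub, diagonal_sub]
    calc _ ≤ 2 * α ^ 2 ^ N / (1 - α ^ 2 ^ N) * (specNorm V * specNorm V⁻¹) :=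
          specNorm_mul_diagonal_mul_le _ _ _ (by bound) fun i => (hscalar i N).2
      _ ≤ _ := by
          have := mul_nonneg (specNorm_nonneg V) (specNorm_nonneg V⁻¹)
          gcongr
          linarith
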